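/- arXiv:0903.0912 — 6 statements merged into one kernel-verified Lean document; each statement's English description precedes it below -/
import Mathlib

section
/- Let s ≥ 1 be a natural number and let Λ be a strongly regular graph with parameters (v, k, λ, μ) = (6s − 1, 2s, 0, s). Then s = 1 and Λ is isomorphic to the cycle graph on 5 vertices (the pentagon). -/
/-!
Triangle-freeness and `k = 2μ` force `μ ≤ 1` in a strongly regular graph that is not complete,
hence `s = 1`. Then a vertex `x` with neighbours `a, b`, whose further neighbours are `c, d`, gives
a closed non-backtracking walk `x a c d b`: an injective homomorphism from the 5-cycle into a
2-regular graph, hence an isomorphism.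
-/

open scoped Classical

open Finset Function

theorem Fin.injective_five_of_ne_add_one_of_ne_add_two {α : Type*} {f : Fin 5 → α}
    (h₁ : ∀ i, f (i + 1) ≠ f i) (h₂ : ∀ i, f (i + 2) ≠ f i) : Injective f := by
  intro i j hij
  have := h₁ i; have := h₁ j; have := h₂ i; have := h₂ j
  fin_cases i <;> fin_cases j <;> simp_all

namespace SimpleGraph

variable {V W : Type*}

section LocallyFinite

variable {G : SimpleGraph V} {H : SimpleGraph W} [G.LocallyFinite] [H.LocallyFinite]

/-- `φ` maps the neighbourhood of `u` injectively into that of `φ u`, which is no larger. -/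
theorem Hom.adj_of_adj_apply (φ : G →g H) (hφ : Injective φ)
    (hdeg : ∀ v, H.degree (φ v) ≤ G.degree v) {u w : V} (h : H.Adj (φ u) (φ w)) : G.Adj u w := by
  have hsub : (G.neighborFinset u).map ⟨φ, hφ⟩ ⊆ H.neighborFinset (φ u) := by
    intro z hz
    obtain ⟨y, hy, rfl⟩ := mem_map.mp hz
    exact (mem_neighborFinset _ _ _).mpr (φ.map_adj ((mem_neighborFinset _ _ _).mp hy))
  have heq := eq_of_subset_of_card_le hsub (by simpa [card_neighborFinset_eq_degree] using hdeg u)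
  have hw : φ w ∈ (G.neighborFinset u).map ⟨φ, hφ⟩ := heq ▸ (mem_neighborFinset _ _ _).mpr h
  obtain ⟨y, hy, hyw⟩ := mem_map.mp hw
  rwa [hφ hyw, mem_neighborFinset] at hy

noncomputable def Iso.ofBijectiveOfDegreeLE (φ : G →g H) (hφ : Bijective φ)
    (hdeg : ∀ v, H.degree (φ v) ≤ G.degree v) : G ≃g H :=
  ⟨Equiv.ofBijective φ hφ, ⟨φ.adj_of_adj_apply hφ.1 hdeg, φ.map_adj⟩⟩

end LocallyFinite

def cycleGraph.homOfAdjAddOne {G : SimpleGraph V} {n : ℕ} (f : Fin (n + 2) → V)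
    (hf : ∀ i, G.Adj (f i) (f (i + 1))) : cycleGraph (n + 2) →g G where
  toFun := f
  map_rel' {u v} huv := by
    rcases cycleGraph_adj.mp huv with h | h
    · rw [sub_eq_iff_eq_add'] at h
      exact h ▸ (hf v).symm
    · rw [sub_eq_iff_eq_add'] at h
      exact h ▸ hf u

section StronglyRegular

variable [Fintype V] {G : SimpleGraph V} [DecidableRel G.Adj] {n k ℓ μ : ℕ} {u v w x y z : V}

theorem IsSRGWith.not_adj_of_adj_of_adj (h : G.IsSRGWith n k 0 μ) (huv : G.Adj u v)
    (huw : G.Adj u w) : ¬G.Adj v w := fun hvw =>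
  (Fintype.card_eq_zero_iff.mp (h.of_adj u v huv)).elim' ⟨w, huw, hvw⟩

theorem IsSRGWith.exists_adj_adj_of_not_adj (h : G.IsSRGWith n k ℓ μ) (hμ : 0 < μ) (hne : v ≠ w)
    (hna : ¬G.Adj v w) : ∃ z, G.Adj v z ∧ G.Adj w z := by
  obtain ⟨⟨z, hz⟩⟩ := Fintype.card_pos_iff.mp ((h.of_not_adj hne hna).symm ▸ hμ)
  exact ⟨z, hz⟩

theorem IsSRGWith.eq_of_adj_of_adj (h : G.IsSRGWith n k ℓ 1) (hne : v ≠ w) (hna : ¬G.Adj v w)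
    (hvy : G.Adj v y) (hwy : G.Adj w y) (hvz : G.Adj v z) (hwz : G.Adj w z) : y = z := by
  have := Fintype.card_le_one_iff.mp (h.of_not_adj hne hna).le ⟨y, hvy, hwy⟩ ⟨z, hvz, hwz⟩
  exact congrArg Subtype.val this

theorem IsSRGWith.ne_top (h : G.IsSRGWith n k ℓ μ) (hk : k + 1 < n) : G ≠ ⊤ := by
  obtain ⟨v⟩ := Fintype.card_pos_iff.mp (show 0 < Fintype.card V by rw [h.card]; omega)
  obtain ⟨w, hvw⟩ := (Gᶜ.degree_pos_iff_exists_adj v).mp (by rw [h.compl_is_regular v]; omega)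
  exact ne_top_iff_exists_not_adj.mpr ⟨v, w, (compl_adj ..).mp hvw⟩

variable [DecidableEq V]

theorem card_commonNeighbors_eq_card_inter (v w : V) :
    Fintype.card (G.commonNeighbors v w) = #(G.neighborFinset v ∩ G.neighborFinset w) := by
  rw [← Set.toFinset_card]
  congr 1
  ext z
  rw [Set.mem_toFinset]
  simp [commonNeighbors]

theorem IsSRGWith.card_inter_of_not_adj (h : G.IsSRGWith n k ℓ μ) (hne : v ≠ w)
    (hna : ¬G.Adj v w) : #(G.neighborFinset v ∩ G.neighborFinset w) = μ := by
  rw [← card_commonNeighbors_eq_card_inter]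
  exact h.of_not_adj hne hna

theorem IsSRGWith.card_neighborFinset_sdiff_of_not_adj (h : G.IsSRGWith n k ℓ μ) (hne : x ≠ v)
    (hna : ¬G.Adj x v) : #(G.neighborFinset v \ insert x (G.neighborFinset x)) = k - μ := by
  have hx : x ∉ G.neighborFinset v := by simpa [adj_comm] using hna
  rw [card_sdiff, insert_inter_of_notMem hx, h.card_inter_of_not_adj hne hna,
    card_neighborFinset_eq_degree, h.regular v]

theorem exists_neighborFinset_eq_pair (hdeg : G.degree v = 2) (hvu : G.Adj v u) :
    ∃ w, w ≠ u ∧ G.neighborFinset v = {u, w} := by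
  rw [← card_neighborFinset_eq_degree] at hdeg
  obtain ⟨a, b, hab, hN⟩ := card_eq_two.mp hdeg
  have hu : u ∈ G.neighborFinset v := (mem_neighborFinset _ _ _).mpr hvu
  rw [hN, mem_insert, mem_singleton] at hu
  rcases hu with rfl | rfl
  · exact ⟨b, hab.symm, hN⟩
  · exact ⟨a, hab, hN.trans (pair_comm a u)⟩

/-- Fix `x` and a non-neighbour `m`, and let `R` be the neighbours of `m` at distance two from `x`.
Every neighbour `y` of `x` that misses `m` has its `μ` common neighbours with `m` inside `R`, and
`#R = 2μ - μ = μ`, so `y` is adjacent to all of `R`. Two vertices of `R` are then non-adjacent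
with `μ + 1` common neighbours: `m` and their `μ` common neighbours with `x`. -/
theorem IsSRGWith.mu_le_one (h : G.IsSRGWith n (2 * μ) 0 μ) (ht : G ≠ ⊤) : μ ≤ 1 := by
  obtain ⟨x, m, hxm, hxm'⟩ := ne_top_iff_exists_not_adj.mp ht
  by_contra! hμ
  set R := G.neighborFinset m \ insert x (G.neighborFinset x)
  have hR : #R = μ := by rw [h.card_neighborFinset_sdiff_of_not_adj hxm hxm']; omega
  have hmR : ∀ {y}, y ∈ R ↔ G.Adj m y ∧ y ≠ x ∧ ¬G.Adj x y := fun {y} => by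
    simp [R, mem_neighborFinset]
  have adj_of_mem_R : ∀ {y r}, G.Adj x y → ¬G.Adj m y → r ∈ R → G.Adj y r := by
    intro y r hxy hmy hr
    have hsub : G.neighborFinset m ∩ G.neighborFinset y ⊆ R := by
      intro z hz
      simp only [mem_inter, mem_neighborFinset] at hz
      exact hmR.mpr
        ⟨hz.1, fun hzx => hxm' (hzx ▸ hz.1.symm), h.not_adj_of_adj_of_adj hxy.symm hz.2⟩
    have hmy' : m ≠ y := fun hmy' => hxm' (hmy' ▸ hxy)
    rw [← eq_of_subset_of_card_le hsub (by rw [hR, h.card_inter_of_not_adj hmy' hmy]),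
      mem_inter, mem_neighborFinset, mem_neighborFinset] at hr
    exact hr.2
  obtain ⟨r₁, hr₁, r₂, hr₂, hr₁₂⟩ := one_lt_card.mp (show 1 < #R by omega)
  obtain ⟨hmr₁, hr₁x, hxr₁⟩ := hmR.mp hr₁
  have hmr₂ := (hmR.mp hr₂).1
  have hsub : insert m (G.neighborFinset x ∩ G.neighborFinset r₁) ⊆
      G.neighborFinset r₁ ∩ G.neighborFinset r₂ := by
    intro z hz
    simp only [mem_insert, mem_inter, mem_neighborFinset] at hz ⊢
    rcases hz with rfl | ⟨hxz, hr₁z⟩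
    · exact ⟨hmr₁.symm, hmr₂.symm⟩
    · exact ⟨hr₁z, (adj_of_mem_R hxz (h.not_adj_of_adj_of_adj hmr₁.symm hr₁z) hr₂).symm⟩
  have hm : m ∉ G.neighborFinset x ∩ G.neighborFinset r₁ := fun hm' =>
    hxm' ((mem_neighborFinset _ _ _).mp (mem_inter.mp hm').1)
  have := card_le_card hsub
  rw [card_insert_of_notMem hm, h.card_inter_of_not_adj hr₁x.symm hxr₁,
    h.card_inter_of_not_adj hr₁₂ (h.not_adj_of_adj_of_adj hmr₁ hmr₂)] at this
  omega

theorem IsSRGWith.nonempty_iso_cycleGraph_five (h : G.IsSRGWith 5 2 0 1) :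
    Nonempty (G ≃g cycleGraph 5) := by
  obtain ⟨x⟩ := Fintype.card_pos_iff.mp (show 0 < Fintype.card V by rw [h.card]; omega)
  obtain ⟨a, b, hab, hN⟩ :=
    card_eq_two.mp ((card_neighborFinset_eq_degree G x).trans (h.regular x))
  have hxa : G.Adj x a := (mem_neighborFinset _ _ _).mp (by simp [hN])
  have hxb : G.Adj x b := (mem_neighborFinset _ _ _).mp (by simp [hN])
  obtain ⟨c, hcx, hNa⟩ := exists_neighborFinset_eq_pair (h.regular a) hxa.symm
  obtain ⟨d, hdx, hNb⟩ := exists_neighborFinset_eq_pair (h.regular b) hxb.symm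
  have hac : G.Adj a c := (mem_neighborFinset _ _ _).mp (by simp [hNa])
  have hbd : G.Adj b d := (mem_neighborFinset _ _ _).mp (by simp [hNb])
  have hab' : ¬G.Adj a b := h.not_adj_of_adj_of_adj hxa hxb
  have hda : d ≠ a := fun hda => hab' (hda ▸ hbd.symm)
  have hcb : c ≠ b := fun hcb => hab' (hcb ▸ hac)
  have hcb' : ¬G.Adj c b := fun hcb' =>
    hcx (h.eq_of_adj_of_adj hab hab' hac hcb'.symm hxa.symm hxb.symm)
  have hcd : G.Adj c d := by
    obtain ⟨z, hcz, hbz⟩ := h.exists_adj_adj_of_not_adj one_pos hcb hcb'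
    have hz : z ∈ G.neighborFinset b := (mem_neighborFinset _ _ _).mpr hbz
    rw [hNb, mem_insert, mem_singleton] at hz
    rcases hz with rfl | rfl
    · exact absurd hcz.symm (h.not_adj_of_adj_of_adj hxa.symm hac)
    · exact hcz
  set f : Fin 5 → V := ![x, a, c, d, b]
  have hf : ∀ i, G.Adj (f i) (f (i + 1)) := by
    intro i
    fin_cases i
    exacts [hxa, hac, hcd, hbd.symm, hxb.symm]
  have hf₂ : ∀ i, f (i + 2) ≠ f i := by
    intro i
    fin_cases i
    exacts [hcx, hda, hcb.symm, hdx.symm, hab]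
  have hinj := Fin.injective_five_of_ne_add_one_of_ne_add_two (fun i => (hf i).ne') hf₂
  refine ⟨(Iso.ofBijectiveOfDegreeLE (cycleGraph.homOfAdjAddOne f hf) ?_ ?_).symm⟩
  · exact (Fintype.bijective_iff_injective_and_card _).mpr ⟨hinj, by simp [h.card]⟩
  · intro v
    rw [h.regular, cycleGraph_degree_three_le]

end StronglyRegular

end SimpleGraph

/-- a strongly regular graph with parameters `(6s - 1, 2s, 0, s)` (with `s ≥ 1`)
only exists for `s = 1`, and it is then isomorphic to the pentagon (the 5-cycle). -/
theorem srg_lambda_zero_is_pentagon {V : Type*} [Fintype V] (s : ℕ) (hs : 1 ≤ s)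
    (Λ : SimpleGraph V) (h : Λ.IsSRGWith (6 * s - 1) (2 * s) 0 s) :
    s = 1 ∧ Nonempty (Λ ≃g SimpleGraph.cycleGraph 5) := by
  obtain rfl : s = 1 := le_antisymm (h.mu_le_one (h.ne_top (by omega))) hs
  exact ⟨rfl, h.nonempty_iso_cycleGraph_five⟩
end

section
/- Let s ≥ 1 be a natural number and let Λ be a strongly regular graph with parameters (v, k, λ, μ) = (6s − 3, 2s, 1, s). Then s ∈ {1, 2, 3, 5}; equivalently, the number of vertices v belongs to {3, 9, 15, 27}. -/
/-!
The adjacency matrix `A` of an `srg(6s - 3, 2s, 1, s)` satisfies `A² = s I + (1 - s) A + s J`,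
so its eigenvalues are `2s`, `1` and `-s`, and `E = 3 (I - A) + J` satisfies `E² = 3 (s + 1) E`:
`E / (3 (s + 1))` is the orthogonal projection onto the `-s`-eigenspace.

* Its trace `4 (6s - 3) / (3 (s + 1))` is the multiplicity of `-s`, an integer;
  hence `s + 1 ∣ 12`.
* `E` is positive semidefinite, hence so is `E ⊙ E ⊙ E` by the Schur product theorem, and
  `0 ≤ ∑ᵢⱼ Eᵢⱼ³ = 12 (6s - 3) (5 - s)` (a Krein condition); hence `s ≤ 5`.
-/

open Matrix SimpleGraph

namespace Matrix

variable {n : Type*} [Fintype n]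

theorem trace_eq_rank_of_isIdempotentElem [DecidableEq n] {K : Type*} [Field K]
    {P : Matrix n n K} (hP : IsIdempotentElem P) : P.trace = P.rank := by
  have hf : IsIdempotentElem (toLin' P) := hP.map (toLinAlgEquiv' (R := K) (n := n))
  rw [← trace_toLin'_eq, (LinearMap.IsIdempotentElem.isProj_range _ hf).trace]
  rfl

theorem PosSemidef.sum_pow_three_nonneg {B : Matrix n n ℝ} (hB : B.PosSemidef) :
    0 ≤ ∑ i, ∑ j, B i j ^ 3 := by
  have := (hB.hadamard hB |>.hadamard hB).dotProduct_mulVec_nonneg (fun _ => 1)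
  simpa [dotProduct, mulVec, pow_three, mul_assoc] using this

theorem posSemidef_of_mul_self_eq_smul {B : Matrix n n ℝ} (hB : B.IsHermitian) {a : ℝ}
    (ha : 0 < a) (h : B * B = a • B) : B.PosSemidef := by
  have := (posSemidef_conjTranspose_mul_self B).smul (inv_nonneg.2 ha.le)
  rwa [hB.eq, h, smul_smul, inv_mul_cancel₀ ha.ne', one_smul] at this

theorem of_one_mul_of_one {α : Type*} [NonAssocSemiring α] :
    (of 1 : Matrix n n α) * of 1 = (Fintype.card n : α) • of 1 := by
  ext; simp [mul_apply]

end Matrix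

namespace SimpleGraph

variable {V : Type*} [Fintype V] {G : SimpleGraph V} [DecidableRel G.Adj] {α : Type*}

theorem IsRegularOfDegree.adjMatrix_mul_of_one [NonAssocSemiring α] {k : ℕ}
    (h : G.IsRegularOfDegree k) : G.adjMatrix α * of 1 = (k : α) • of 1 := by
  ext i j; simp [adjMatrix_mul_apply, h i]

theorem IsRegularOfDegree.of_one_mul_adjMatrix [NonAssocSemiring α] {k : ℕ}
    (h : G.IsRegularOfDegree k) : of 1 * G.adjMatrix α = (k : α) • of 1 := by
  ext i j; simp [mul_adjMatrix_apply, h j]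

theorem IsRegularOfDegree.sum_adjMatrix [NonAssocSemiring α] {k : ℕ}
    (h : G.IsRegularOfDegree k) : ∑ i, ∑ j, G.adjMatrix α i j = Fintype.card V * k := by
  calc ∑ i, ∑ j, G.adjMatrix α i j = ∑ i, (G.adjMatrix α *ᵥ Function.const V 1) i := by
        simp [mulVec, dotProduct]
    _ = Fintype.card V * k := by
        simp only [adjMatrix_mulVec_const_apply_of_regular h, mul_one, Finset.sum_const,
          Finset.card_univ, nsmul_eq_mul]

omit [Fintype V] in
theorem adjMatrix_compl_eq [DecidableEq V] [Ring α] :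
    Gᶜ.adjMatrix α = of 1 - 1 - G.adjMatrix α := by
  ext i j
  rcases eq_or_ne i j with rfl | hij
  · simp
  · by_cases hadj : G.Adj i j <;> simp [hij, hadj, one_apply]

theorem IsSRGWith.adjMatrix_mul_self [DecidableEq V] [CommRing α] {n k ℓ μ : ℕ}
    (h : G.IsSRGWith n k ℓ μ) :
    G.adjMatrix α * G.adjMatrix α =
      ((k : α) - μ) • 1 + ((ℓ : α) - μ) • G.adjMatrix α + (μ : α) • of 1 := by
  rw [← sq, h.matrix_eq, adjMatrix_compl_eq]
  simp only [← Nat.cast_smul_eq_nsmul α]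
  match_scalars <;> ring

variable (G) in
noncomputable def scaledEigenprojection [DecidableEq V] : Matrix V V ℝ :=
  (3 : ℝ) • (1 - G.adjMatrix ℝ) + of 1

omit [Fintype V] in
theorem scaledEigenprojection_apply [DecidableEq V] (i j : V) :
    G.scaledEigenprojection i j = if i = j then 4 else if G.Adj i j then -2 else 1 := by
  rcases eq_or_ne i j with rfl | hij
  · norm_num [scaledEigenprojection]
  · by_cases hadj : G.Adj i j <;> norm_num [scaledEigenprojection, hij, hadj]

omit [Fintype V] in
theorem isHermitian_scaledEigenprojection [DecidableEq V] :
    G.scaledEigenprojection.IsHermitian := by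
  ext i j
  simp [scaledEigenprojection_apply, eq_comm, G.adj_comm]

theorem trace_scaledEigenprojection [DecidableEq V] :
    G.scaledEigenprojection.trace = 4 * Fintype.card V := by
  simp [trace, scaledEigenprojection_apply, mul_comm]

theorem IsRegularOfDegree.sum_scaledEigenprojection_pow_three [DecidableEq V] {k : ℕ}
    (h : G.IsRegularOfDegree k) :
    ∑ i, ∑ j, G.scaledEigenprojection i j ^ 3 =
      Fintype.card V * (63 - 9 * k + Fintype.card V) := by
  have entry (i j : V) : G.scaledEigenprojection i j ^ 3 =
      63 * (if i = j then 1 else 0) - 9 * G.adjMatrix ℝ i j + 1 := by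
    rcases eq_or_ne i j with rfl | hij
    · norm_num [scaledEigenprojection_apply]
    · by_cases hadj : G.Adj i j <;> norm_num [scaledEigenprojection_apply, hij, hadj]
  simp only [entry, Finset.sum_add_distrib, Finset.sum_sub_distrib, ← Finset.mul_sum,
    h.sum_adjMatrix]
  simp
  ring

section LambdaOne

variable [DecidableEq V] {s : ℕ}

omit [DecidableEq V] in
theorem IsSRGWith.cast_card (h : G.IsSRGWith (6 * s - 3) (2 * s) 1 s) (hs : 1 ≤ s) :
    (Fintype.card V : ℝ) = 6 * s - 3 := by
  rw [h.card, Nat.cast_sub (by omega)]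
  push_cast
  ring

theorem IsSRGWith.scaledEigenprojection_mul_self (h : G.IsSRGWith (6 * s - 3) (2 * s) 1 s)
    (hs : 1 ≤ s) :
    G.scaledEigenprojection * G.scaledEigenprojection =
      (3 * (s + 1) : ℝ) • G.scaledEigenprojection := by
  have hcard := h.cast_card hs
  simp only [scaledEigenprojection, sub_mul, mul_sub, add_mul, mul_add, smul_mul_assoc,
    mul_smul_comm, one_mul, mul_one, h.adjMatrix_mul_self, h.regular.adjMatrix_mul_of_one,
    h.regular.of_one_mul_adjMatrix, of_one_mul_of_one, hcard, smul_sub, smul_add]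
  push_cast
  match_scalars <;> ring

theorem IsSRGWith.le_five (h : G.IsSRGWith (6 * s - 3) (2 * s) 1 s) (hs : 1 ≤ s) : s ≤ 5 := by
  have hE : G.scaledEigenprojection.PosSemidef :=
    posSemidef_of_mul_self_eq_smul isHermitian_scaledEigenprojection (by positivity)
      (h.scaledEigenprojection_mul_self hs)
  have hkrein := hE.sum_pow_three_nonneg
  rw [h.regular.sum_scaledEigenprojection_pow_three, h.cast_card hs] at hkrein
  push_cast at hkrein
  have hs' : (1 : ℝ) ≤ s := by exact_mod_cast hs
  have : (s : ℝ) ≤ 5 := by nlinarith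
  exact_mod_cast this

theorem IsSRGWith.succ_dvd_twelve (h : G.IsSRGWith (6 * s - 3) (2 * s) 1 s) (hs : 1 ≤ s) :
    s + 1 ∣ 12 := by
  have ha : (3 * (s + 1) : ℝ) ≠ 0 := by positivity
  have hP : IsIdempotentElem ((3 * (s + 1) : ℝ)⁻¹ • G.scaledEigenprojection) := by
    rw [IsIdempotentElem, smul_mul_smul_comm, h.scaledEigenprojection_mul_self hs, smul_smul,
      mul_assoc, inv_mul_cancel₀ ha, mul_one]
  have hmult := trace_eq_rank_of_isIdempotentElem hP
  rw [trace_smul, trace_scaledEigenprojection, h.cast_card hs, smul_eq_mul] at hmult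
  set m := ((3 * (s + 1) : ℝ)⁻¹ • G.scaledEigenprojection).rank
  have hm : (m : ℝ) * (s + 1) + 12 = 8 * (s + 1) := by
    rw [← hmult]
    field_simp
    ring
  have hm' : m * (s + 1) + 12 = 8 * (s + 1) := by exact_mod_cast hm
  exact (Nat.dvd_add_right (dvd_mul_left _ _)).1 (hm' ▸ dvd_mul_left _ _)

end LambdaOne

end SimpleGraph

open scoped Classical

/-- a strongly regular graph with parameters `(6s - 3, 2s, 1, s)` (with `s ≥ 1`)
only exists for `s ∈ {1, 2, 3, 5}`, i.e. with `3`, `9`, `15` or `27` vertices. -/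
theorem srg_lambda_one_params {V : Type*} [Fintype V] (s : ℕ) (hs : 1 ≤ s)
    (Λ : SimpleGraph V) (h : Λ.IsSRGWith (6 * s - 3) (2 * s) 1 s) :
    s ∈ ({1, 2, 3, 5} : Set ℕ) ∧ Fintype.card V ∈ ({3, 9, 15, 27} : Set ℕ) := by
  have hs5 := h.le_five hs
  have hdvd := h.succ_dvd_twelve hs
  have hs' : s = 1 ∨ s = 2 ∨ s = 3 ∨ s = 5 := by
    interval_cases s <;> simp_all
  rw [h.card]
  rcases hs' with rfl | rfl | rfl | rfl <;> simp
end

section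
/- Let s ≥ 1 and let Λ be a strongly regular graph with parameters (6s − 3, 2s, 1, s), and let y be a vertex of Λ. Then the induced subgraph of Λ on the set Λ(y,2) of vertices at distance 2 from y contains no triangle. -/
/-!
Let `abc` be a triangle at distance two from `y`. Since `λ = 1`, the only common neighbour of
`a` and `b` is `c`, which is not adjacent to `y`; hence the sets `N(y) ∩ N(a)`, `N(y) ∩ N(b)`,
`N(y) ∩ N(c)` are pairwise disjoint. Each has `μ = s` elements and all lie in `N(y)`, so
`3s ≤ 2s`, which is impossible for `s ≥ 1`.
-/

open Finset

namespace SimpleGraph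

variable {V : Type*} {G : SimpleGraph V}

theorem ne_and_not_adj_of_dist_eq_two {u v : V} (h : G.dist u v = 2) : u ≠ v ∧ ¬G.Adj u v := by
  refine ⟨?_, fun huv => ?_⟩
  · rintro rfl
    simp at h
  · rw [dist_eq_one_iff_adj.2 huv] at h
    exact absurd h (by decide)

variable [Fintype V] [DecidableRel G.Adj] {n k μ : ℕ}

theorem IsSRGWith.eq_of_mem_commonNeighbors (h : G.IsSRGWith n k 1 μ) {v w x z : V}
    (hvw : G.Adj v w) (hx : x ∈ G.commonNeighbors v w) (hz : z ∈ G.commonNeighbors v w) :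
    x = z :=
  congrArg Subtype.val <|
    Fintype.card_le_one_iff.1 (h.of_adj v w hvw).le ⟨x, hx⟩ ⟨z, hz⟩

theorem IsSRGWith.disjoint_commonNeighbors_of_triangle (h : G.IsSRGWith n k 1 μ) {y a b c : V}
    (hab : G.Adj a b) (hac : G.Adj a c) (hbc : G.Adj b c) (hyc : ¬G.Adj y c) :
    Disjoint (G.commonNeighbors y a) (G.commonNeighbors y b) := by
  refine Set.disjoint_left.2 fun w hwa hwb => hyc ?_
  have hwc : w = c := h.eq_of_mem_commonNeighbors hab ⟨hwa.2, hwb.2⟩ ⟨hac, hbc⟩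
  exact hwc ▸ hwa.1

theorem IsSRGWith.three_mul_le_of_triangle (h : G.IsSRGWith n k 1 μ) {y a b c : V}
    (hab : G.Adj a b) (hac : G.Adj a c) (hbc : G.Adj b c)
    (hya : y ≠ a) (hyb : y ≠ b) (hyc : y ≠ c)
    (hna : ¬G.Adj y a) (hnb : ¬G.Adj y b) (hnc : ¬G.Adj y c) : 3 * μ ≤ k := by
  classical
  set A := (G.commonNeighbors y a).toFinset
  set B := (G.commonNeighbors y b).toFinset
  set C := (G.commonNeighbors y c).toFinset
  have hA : #A = μ := by rw [Set.toFinset_card]; exact h.of_not_adj hya hna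
  have hB : #B = μ := by rw [Set.toFinset_card]; exact h.of_not_adj hyb hnb
  have hC : #C = μ := by rw [Set.toFinset_card]; exact h.of_not_adj hyc hnc
  have hAB : Disjoint A B :=
    Set.disjoint_toFinset.2 (h.disjoint_commonNeighbors_of_triangle hab hac hbc hnc)
  have hAC : Disjoint A C :=
    Set.disjoint_toFinset.2 (h.disjoint_commonNeighbors_of_triangle hac hab hbc.symm hnb)
  have hBC : Disjoint B C :=
    Set.disjoint_toFinset.2 (h.disjoint_commonNeighbors_of_triangle hbc hab.symm hac.symm hna)
  have hsub : A ∪ B ∪ C ⊆ G.neighborFinset y := by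
    intro w hw
    simp only [A, B, C, mem_union, Set.mem_toFinset] at hw
    rw [mem_neighborFinset]
    rcases hw with (hw | hw) | hw <;> exact hw.1
  calc 3 * μ = #(A ∪ B ∪ C) := by
        rw [card_union_of_disjoint (disjoint_union_left.2 ⟨hAC, hBC⟩),
          card_union_of_disjoint hAB, hA, hB, hC]
        ring
    _ ≤ #(G.neighborFinset y) := card_le_card hsub
    _ = k := h.regular y

end SimpleGraph

open scoped Classical

/-- in a strongly regular graph with parameters `(6s - 3, 2s, 1, s)`, the set of
vertices at distance `2` from any vertex `y` contains no triangle. -/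
theorem srg_lambda_one_distance_two_triangle_free {V : Type*} [Fintype V] (s : ℕ) (hs : 1 ≤ s)
    (Λ : SimpleGraph V) (h : Λ.IsSRGWith (6 * s - 3) (2 * s) 1 s)
    (y a b c : V) (ha : Λ.dist y a = 2) (hb : Λ.dist y b = 2) (hc : Λ.dist y c = 2)
    (hab : Λ.Adj a b) (hbc : Λ.Adj b c) (hac : Λ.Adj a c) : False := by
  obtain ⟨hya, hna⟩ := SimpleGraph.ne_and_not_adj_of_dist_eq_two ha
  obtain ⟨hyb, hnb⟩ := SimpleGraph.ne_and_not_adj_of_dist_eq_two hb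
  obtain ⟨hyc, hnc⟩ := SimpleGraph.ne_and_not_adj_of_dist_eq_two hc
  have := h.three_mul_le_of_triangle hab hac hbc hya hyb hyc hna hnb hnc
  omega
end

section
/- Let q be a prime power with q ≡ 1 (mod 4) and let P(q) be the Paley graph on the finite field F_q, in which two distinct elements x, y are adjacent iff x − y is a nonzero square. Then P(q) is strongly regular with parameters (v, k, λ, μ) = (q, (q − 1)/2, (q − 5)/4, (q − 1)/4): every vertex has (q − 1)/2 neighbours, any two adjacent vertices have exactly (q − 5)/4 common neighbours, and any two distinct non-adjacent vertices have exactly (q − 1)/4 common neighbours; in particular P(q) has diameter 2. -/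
/-!
Write `χ` for the quadratic character of `F`. For all `x` and `z`, twice the indicator of
`G.Adj x z` is `1 + χ (x - z) - [x = z]`. Summing this over `z` gives the degree; summing the
product of two such expressions gives the number of common neighbours of `x ≠ y`, and since `-1` is
a square, `χ (y - x) = χ (x - y)`, so that `4 · #(common neighbours) = q - 3 - 2 χ (x - y)`. The
only non-trivial character sum that occurs is `∑ z, χ (x - z) * χ (y - z) = -1`, which an affine
change of variables turns into the Jacobi sum `J(χ, χ) = -χ (-1)`.
-/

open scoped Classical
open Finset

section QuadraticCharSums

variable {F : Type*} [Field F] [Fintype F]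

theorem quadraticChar_sum_sub (hF : ringChar F ≠ 2) (x : F) :
    ∑ z, quadraticChar F (x - z) = 0 := by
  rw [← quadraticChar_sum_zero hF]
  exact (Equiv.subLeft x).sum_comp _

theorem quadraticChar_sum_sub_mul_sub (hF : ringChar F ≠ 2) {x y : F} (hxy : x ≠ y) :
    ∑ z, quadraticChar F (x - z) * quadraticChar F (y - z) = -1 := by
  have hJ : jacobiSum (quadraticChar F) (quadraticChar F) = -quadraticChar F (-1) := by
    simpa only [(quadraticChar_isQuadratic F).inv] using
      jacobiSum_nontrivial_inv (quadraticChar_ne_one hF)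
  have hd : x - y ≠ 0 := sub_ne_zero.mpr hxy
  calc ∑ z, quadraticChar F (x - z) * quadraticChar F (y - z)
      = ∑ s, quadraticChar F ((x - y) * s) * quadraticChar F (-1 * ((x - y) * (1 - s))) := by
        rw [← ((Equiv.mulLeft₀ (x - y) hd).trans (Equiv.subLeft x)).sum_comp]
        refine sum_congr rfl fun s _ => ?_
        simp only [Equiv.trans_apply, Equiv.mulLeft₀_apply, Equiv.subLeft_apply]
        ring_nf
    _ = ∑ s, quadraticChar F (-1) * (quadraticChar F s * quadraticChar F (1 - s)) := by
        refine sum_congr rfl fun s _ => ?_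
        simp only [map_mul]
        linear_combination (quadraticChar F (-1) * quadraticChar F s * quadraticChar F (1 - s)) *
          quadraticChar_sq_one hd
    _ = -1 := by
        rw [← mul_sum, ← jacobiSum, hJ, mul_neg, ← map_mul, neg_one_mul, neg_neg, map_one]

end QuadraticCharSums

section PaleyGraph

variable {F : Type*} [Field F] [Fintype F] {G : SimpleGraph F}

theorem ite_adj_eq_one_add_quadraticChar
    (hG : ∀ x y : F, G.Adj x y ↔ x ≠ y ∧ IsSquare (x - y)) (x z : F) :
    (if G.Adj x z then 2 else 0 : ℤ) = 1 + quadraticChar F (x - z) - if x = z then 1 else 0 := by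
  by_cases hxz : x = z
  · simp [hxz]
  by_cases hsq : IsSquare (x - z)
  · simp [hG, hxz, hsq, (quadraticChar_one_iff_isSquare (sub_ne_zero.mpr hxz)).mpr hsq]
  · simp [hG, hxz, hsq, quadraticChar_neg_one_iff_not_isSquare.mpr hsq]

theorem two_mul_degree_eq (hG : ∀ x y : F, G.Adj x y ↔ x ≠ y ∧ IsSquare (x - y))
    (hF : ringChar F ≠ 2) (x : F) : 2 * (G.degree x : ℤ) = Fintype.card F - 1 := by
  rw [← G.card_neighborFinset_eq_degree, G.neighborFinset_eq_filter, natCast_card_filter,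
    mul_sum]
  simp only [mul_boole, ite_adj_eq_one_add_quadraticChar hG, sum_sub_distrib, sum_add_distrib,
    quadraticChar_sum_sub hF, sum_ite_eq, mem_univ]
  simp

theorem four_mul_card_commonNeighbors_eq
    (hG : ∀ x y : F, G.Adj x y ↔ x ≠ y ∧ IsSquare (x - y)) (hF : ringChar F ≠ 2)
    (hneg : IsSquare (-1 : F)) {x y : F} (hxy : x ≠ y) :
    4 * (Fintype.card (G.commonNeighbors x y) : ℤ) =
      Fintype.card F - 3 - 2 * quadraticChar F (x - y) := by
  have hsymm : quadraticChar F (y - x) = quadraticChar F (x - y) := by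
    rw [← neg_sub, ← neg_one_mul, map_mul,
      (quadraticChar_one_iff_isSquare (neg_ne_zero.mpr one_ne_zero)).mpr hneg, one_mul]
  have hcard : (Fintype.card (G.commonNeighbors x y) : ℤ) =
      ∑ z, if G.Adj x z ∧ G.Adj y z then 1 else 0 := by
    rw [← natCast_card_filter, ← Fintype.card_subtype]
    rfl
  have hfour : ∀ z, (4 * if G.Adj x z ∧ G.Adj y z then 1 else 0 : ℤ) =
      (if G.Adj x z then 2 else 0) * (if G.Adj y z then 2 else 0) := by
    intro z
    by_cases hx : G.Adj x z <;> by_cases hy : G.Adj y z <;> simp [hx, hy]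
  -- the correction terms at `z = x` and `z = y` are isolated so that each sums by `sum_ite_eq`
  have hexpand : ∀ z, ((if G.Adj x z then 2 else 0) * (if G.Adj y z then 2 else 0) : ℤ) =
      1 + quadraticChar F (x - z) + quadraticChar F (y - z) +
        quadraticChar F (x - z) * quadraticChar F (y - z) -
        (if x = z then 1 + quadraticChar F (y - z) else 0) -
        (if y = z then 1 + quadraticChar F (x - z) else 0) := by
    intro z
    rw [ite_adj_eq_one_add_quadraticChar hG, ite_adj_eq_one_add_quadraticChar hG]
    by_cases hx : x = z
    · subst hx
      simp [hxy.symm]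
    by_cases hy : y = z
    · subst hy
      simp [hx]
    simp only [hx, hy, if_false, sub_zero]
    ring
  rw [hcard, mul_sum]
  simp only [hfour, hexpand, sum_sub_distrib, sum_add_distrib, sum_ite_eq, mem_univ, if_true,
    quadraticChar_sum_sub hF, quadraticChar_sum_sub_mul_sub hF hxy, hsymm, sum_const, card_univ]
  simp
  ring

end PaleyGraph

/-- the Paley graph `P(q)` (for a prime power `q ≡ 1 mod 4`) is strongly regular
with parameters `(q, (q-1)/2, (q-5)/4, (q-1)/4)`; in particular it has diameter `2`. -/
theorem paley_is_srg (q : ℕ) (hq : q % 4 = 1) (F : Type*) [Field F] [Fintype F]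
    (hF : Fintype.card F = q) (G : SimpleGraph F)
    (hG : ∀ x y : F, G.Adj x y ↔ x ≠ y ∧ IsSquare (x - y)) :
    G.IsSRGWith q ((q - 1) / 2) ((q - 5) / 4) ((q - 1) / 4) ∧
      ∀ x y : F, x ≠ y → ¬G.Adj x y → ∃ z : F, G.Adj x z ∧ G.Adj y z := by
  have hq5 : 5 ≤ q := by
    have := hF ▸ Fintype.one_lt_card (α := F)
    omega
  have hF2 : ringChar F ≠ 2 := fun h => by
    have := FiniteField.even_card_of_char_two h
    omega
  have hneg : IsSquare (-1 : F) := FiniteField.isSquare_neg_one_iff.mpr (by omega)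
  have hsrg : G.IsSRGWith q ((q - 1) / 2) ((q - 5) / 4) ((q - 1) / 4) := by
    refine ⟨hF, fun v => ?_, fun v w hvw => ?_, fun v w hvw hna => ?_⟩
    · have := two_mul_degree_eq hG hF2 v
      omega
    · have := four_mul_card_commonNeighbors_eq hG hF2 hneg hvw.ne
      rw [(quadraticChar_one_iff_isSquare (sub_ne_zero.mpr hvw.ne)).mpr ((hG v w).mp hvw).2] at this
      omega
    · have := four_mul_card_commonNeighbors_eq hG hF2 hneg hvw
      rw [quadraticChar_neg_one_iff_not_isSquare.mpr fun hsq => hna ((hG v w).mpr ⟨hvw, hsq⟩)]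
        at this
      omega
  refine ⟨hsrg, fun x y hxy hna => ?_⟩
  have hpos : 0 < Fintype.card (G.commonNeighbors x y) := by
    rw [hsrg.of_not_adj hxy hna]
    omega
  obtain ⟨⟨z, hz⟩⟩ := Fintype.card_pos_iff.mp hpos
  exact ⟨z, G.mem_commonNeighbors.mp hz⟩
end

section
/- Let n ≥ 3 and let E be a Seidel matrix on X = {1,…,n}. Assume that G(E) acts doubly transitively on X: for all i, j, k, l ∈ X with i ≠ j and k ≠ l, there exist a permutation σ of X and coefficients ν_a ∈ {−1, 1} (a ∈ X) such that σ(i) = k, σ(j) = l, and E_{σ(a)σ(b)} = ν_a ν_b E_{ab} for all a, b ∈ X. Then the real symmetric matrix E has at most two distinct eigenvalues. -/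
open scoped Classical

/-- A Seidel matrix: symmetric, `1` on the diagonal, entries `±1`. -/
def IsSeidel {n : ℕ} (E : Matrix (Fin n) (Fin n) ℝ) : Prop :=
  E.IsSymm ∧ (∀ i, E i i = 1) ∧ ∀ i j, E i j = 1 ∨ E i j = -1

/-- Two matrices are associated if `E'ᵢⱼ = νᵢ νⱼ Eᵢⱼ` for some signs `νᵢ ∈ {-1,1}`. -/
def SeidelAssoc {n : ℕ} (E E' : Matrix (Fin n) (Fin n) ℝ) : Prop :=
  ∃ ν : Fin n → ℝ, (∀ i, ν i = 1 ∨ ν i = -1) ∧ ∀ i j, E' i j = ν i * ν j * E i j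

/-- Action of a permutation on a matrix: `(σE)ᵢⱼ = E_{σ⁻¹ i, σ⁻¹ j}`. -/
def permM {n : ℕ} (σ : Equiv.Perm (Fin n)) (E : Matrix (Fin n) (Fin n) ℝ) :
    Matrix (Fin n) (Fin n) ℝ :=
  Matrix.of fun i j => E (σ.symm i) (σ.symm j)

/-- Localization of `E` at the point `j` : `(ʲE)ₖₗ = Eₖⱼ Eₗⱼ Eₖₗ`. -/
def locM {n : ℕ} (E : Matrix (Fin n) (Fin n) ℝ) (j : Fin n) :
    Matrix (Fin n) (Fin n) ℝ :=
  Matrix.of fun k l => E k j * E l j * E k l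

/-- The simple graph encoded by a Seidel matrix: two distinct vertices `i, j` are
adjacent iff `Eᵢⱼ = -1` (for a symmetric matrix this is the natural graph). -/
def seidelGraph {n : ℕ} (E : Matrix (Fin n) (Fin n) ℝ) : SimpleGraph (Fin n) :=
  SimpleGraph.fromRel (fun i j => E i j = -1)

/-!
An element of `G(E)` conjugates `E` by a signed permutation matrix, hence also `E²`; so under
double transitivity the ratio `(E²)ᵢⱼ / Eᵢⱼ` takes one value `c` on all pairs `i ≠ j`, while
`(E²)ᵢᵢ = n`. Thus `E² = c E + (n - c) I`, and every eigenvalue is a root of the quadratic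
`x² - c x - (n - c)`.
-/

namespace Matrix

variable {ι R : Type*} [Fintype ι] [CommRing R]

theorem mul_self_apply_map_of_switching {A : Matrix ι ι R} {σ : Equiv.Perm ι} {ν : ι → R}
    (hν : ∀ a, ν a * ν a = 1) (hσ : ∀ a b, A (σ a) (σ b) = ν a * ν b * A a b) (i j : ι) :
    (A * A) (σ i) (σ j) = ν i * ν j * (A * A) i j := by
  simp only [mul_apply, Finset.mul_sum]
  rw [← Equiv.sum_comp σ]
  refine Finset.sum_congr rfl fun k _ => ?_
  rw [hσ, hσ]
  linear_combination ν i * ν j * A i k * A k j * hν k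

theorem exists_mul_self_apply_eq_mul_of_switching_two_transitive {A : Matrix ι ι R}
    (hA : ∀ i j, A i j * A i j = 1)
    (h2t : ∀ i j k l : ι, i ≠ j → k ≠ l →
      ∃ (σ : Equiv.Perm ι) (ν : ι → R), (∀ a, ν a * ν a = 1) ∧
        σ i = k ∧ σ j = l ∧ ∀ a b, A (σ a) (σ b) = ν a * ν b * A a b) :
    ∃ c : R, ∀ i j, i ≠ j → (A * A) i j = c * A i j := by
  by_cases hpair : ∃ i₀ j₀ : ι, i₀ ≠ j₀
  · obtain ⟨i₀, j₀, h₀⟩ := hpair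
    refine ⟨(A * A) i₀ j₀ * A i₀ j₀, fun i j hij => ?_⟩
    obtain ⟨σ, ν, hν, rfl, rfl, hσ⟩ := h2t i₀ j₀ i j h₀ hij
    rw [mul_self_apply_map_of_switching hν hσ, hσ]
    linear_combination -ν i₀ * ν j₀ * (A * A) i₀ j₀ * hA i₀ j₀
  · push Not at hpair
    exact ⟨0, fun i j hij => absurd (hpair i j) hij⟩

end Matrix

namespace IsSeidel

variable {n : ℕ} {E : Matrix (Fin n) (Fin n) ℝ}

theorem mul_self_apply (hE : IsSeidel E) (i j : Fin n) : E i j * E i j = 1 := by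
  rcases hE.2.2 i j with h | h <;> rw [h] <;> norm_num

theorem mul_self_apply_self (hE : IsSeidel E) (i : Fin n) : (E * E) i i = n := by
  simp [Matrix.mul_apply, ← hE.1.apply i, hE.mul_self_apply]

theorem mul_self_eq_of_offDiag {c : ℝ} (hE : IsSeidel E)
    (hc : ∀ i j, i ≠ j → (E * E) i j = c * E i j) :
    E * E = c • E + ((n : ℝ) - c) • 1 := by
  ext i j
  rcases eq_or_ne i j with rfl | hij
  · simp [hE.mul_self_apply_self, hE.2.1]
  · simp [hc i j hij, hij]

end IsSeidel

open Polynomial in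
theorem spectrum.mul_self_eq_of_mul_self_eq {𝕜 A : Type*} [Field 𝕜] [Ring A] [Algebra 𝕜 A]
    {a : A} {c d : 𝕜} (h : a * a = c • a + d • 1) {x : 𝕜} (hx : x ∈ spectrum 𝕜 a) :
    x * x = c * x + d := by
  have : Nontrivial A := (subsingleton_or_nontrivial A).resolve_left fun _ => by
    simp [spectrum.of_subsingleton] at hx
  have hp : aeval a (X * X - C c * X - C d) = 0 := by
    simp [h, Algebra.algebraMap_eq_smul_one]
  have hroot := spectrum.subset_polynomial_aeval a (X * X - C c * X - C d) ⟨x, hx, rfl⟩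
  rw [hp, spectrum.zero_eq] at hroot
  simp only [eval_sub, eval_mul, eval_X, eval_C, Set.mem_singleton_iff] at hroot
  linear_combination hroot

theorem exists_subset_pair_of_mul_self_eq {𝕜 : Type*} [Field 𝕜] {S : Set 𝕜} {c d : 𝕜}
    (hS : ∀ x ∈ S, x * x = c * x + d) : ∃ x y, S ⊆ {x, y} := by
  rcases S.eq_empty_or_nonempty with rfl | ⟨x, hx⟩
  · exact ⟨0, 0, Set.empty_subset _⟩
  refine ⟨x, c - x, fun y hy => ?_⟩
  have hfactor : (y - x) * (y - (c - x)) = 0 := by linear_combination hS y hy - hS x hx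
  rcases mul_eq_zero.mp hfactor with h | h
  · exact Or.inl (sub_eq_zero.mp h)
  · exact Or.inr (sub_eq_zero.mp h)

theorem seidel_two_eigenvalues_general (n : ℕ)
    (E : Matrix (Fin n) (Fin n) ℝ) (hE : IsSeidel E)
    (h2t : ∀ i j k l : Fin n, i ≠ j → k ≠ l →
      ∃ (σ : Equiv.Perm (Fin n)) (ν : Fin n → ℝ), (∀ a, ν a = 1 ∨ ν a = -1) ∧
        σ i = k ∧ σ j = l ∧ ∀ a b : Fin n, E (σ a) (σ b) = ν a * ν b * E a b) :
    ∃ a b : ℝ, spectrum ℝ E ⊆ {a, b} := by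
  obtain ⟨c, hc⟩ := Matrix.exists_mul_self_apply_eq_mul_of_switching_two_transitive
    hE.mul_self_apply fun i j k l hij hkl => by
      obtain ⟨σ, ν, hν, hσ⟩ := h2t i j k l hij hkl
      exact ⟨σ, ν, fun a => mul_self_eq_one_iff.mpr (hν a), hσ⟩
  exact exists_subset_pair_of_mul_self_eq fun x hx =>
    spectrum.mul_self_eq_of_mul_self_eq (hE.mul_self_eq_of_offDiag hc) hx

/-- if `G(E)` acts doubly transitively on `X`, then the Seidel matrix `E`
has at most two distinct (real) eigenvalues. -/
theorem seidel_two_eigenvalues (n : ℕ) (hn : 3 ≤ n)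
    (E : Matrix (Fin n) (Fin n) ℝ) (hE : IsSeidel E)
    (h2t : ∀ i j k l : Fin n, i ≠ j → k ≠ l →
      ∃ (σ : Equiv.Perm (Fin n)) (ν : Fin n → ℝ), (∀ a, ν a = 1 ∨ ν a = -1) ∧
        σ i = k ∧ σ j = l ∧ ∀ a b : Fin n, E (σ a) (σ b) = ν a * ν b * E a b) :
    ∃ a b : ℝ, spectrum ℝ E ⊆ {a, b} :=
  seidel_two_eigenvalues_general n E hE h2t
end

section
/- Let n ≥ 3, let E be a Seidel matrix on X = {1,…,n} and let σ be a permutation of X. The following are equivalent: (a) the matrices E and σE are associated; (b) for every point j ∈ X, σ(ʲE) = ^{σ(j)}E; (c) there exists a point k ∈ X such that σ(ᵏE) = ^{σ(k)}E. -/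
open scoped Classical

/-! Localizing at a point is invariant under switching, so associated matrices have equal
localizations everywhere, and `σ(ʲE) = ^{σ j}(σE)` turns (a) into (b). Conversely, if `E` and
`E'` have `±1` entries and equal localizations at one point `m`, the signs
`νᵢ = Eᵢₘ E'ᵢₘ` switch `E` into `E'`. -/

theorem permM_locM {n : ℕ} (σ : Equiv.Perm (Fin n)) (E : Matrix (Fin n) (Fin n) ℝ) (j : Fin n) :
    permM σ (locM E j) = locM (permM σ E) (σ j) := by
  ext k l
  simp [permM, locM]

theorem SeidelAssoc.locM_eq {n : ℕ} {E E' : Matrix (Fin n) (Fin n) ℝ} (h : SeidelAssoc E E')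
    (j : Fin n) : locM E' j = locM E j := by
  obtain ⟨ν, hν, hE'⟩ := h
  have hν2 : ∀ i, ν i * ν i = 1 := fun i => mul_self_eq_one_iff.mpr (hν i)
  ext k l
  simp only [locM, Matrix.of_apply, hE']
  linear_combination (E k j * E l j * E k l) *
    (ν j * ν j * ν l * ν l * hν2 k + ν j * ν j * hν2 l + hν2 j)

theorem seidelAssoc_of_locM_eq {n : ℕ} {E E' : Matrix (Fin n) (Fin n) ℝ} {m : Fin n}
    (hE : ∀ i, E i m = 1 ∨ E i m = -1) (hE' : ∀ i, E' i m = 1 ∨ E' i m = -1)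
    (h : locM E m = locM E' m) : SeidelAssoc E E' := by
  have hsq : ∀ i, E' i m * E' i m = 1 := fun i => mul_self_eq_one_iff.mpr (hE' i)
  refine ⟨fun i => E i m * E' i m, fun i => ?_, fun i j => ?_⟩
  · rcases hE i with h1 | h1 <;> rcases hE' i with h2 | h2 <;> norm_num [h1, h2]
  · have hij : E i m * E j m * E i j = E' i m * E' j m * E' i j := by
      simpa [locM] using congrFun (congrFun h i) j
    linear_combination (-(E' i m * E' j m)) * hij
      - E' i j * E' j m * E' j m * hsq i - E' i j * hsq j

/-- for a permutation `σ`, the following are equivalent: (a) `E` and `σE` are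
associated; (b) `σ(ʲE) = ^{σ(j)}E` for every `j`; (c) `σ(ᵏE) = ^{σ(k)}E` for some `k`. -/
theorem assoc_perm_iff_loc (n : ℕ) (hn : 3 ≤ n)
    (E : Matrix (Fin n) (Fin n) ℝ) (hE : IsSeidel E) (σ : Equiv.Perm (Fin n)) :
    (SeidelAssoc E (permM σ E) ↔
      ∀ j : Fin n, permM σ (locM E j) = locM E (σ j)) ∧
    (SeidelAssoc E (permM σ E) ↔
      ∃ k : Fin n, permM σ (locM E k) = locM E (σ k)) := by
  simp only [permM_locM]
  have loc_of_assoc (ha : SeidelAssoc E (permM σ E)) (j : Fin n) :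
      locM (permM σ E) (σ j) = locM E (σ j) := ha.locM_eq (σ j)
  have assoc_of_loc : (∃ k, locM (permM σ E) (σ k) = locM E (σ k)) → SeidelAssoc E (permM σ E) :=
    fun ⟨k, hk⟩ => seidelAssoc_of_locM_eq (fun i => hE.2.2 i (σ k))
      (fun i => hE.2.2 (σ.symm i) (σ.symm (σ k))) hk.symm
  have j₀ : Fin n := ⟨0, by omega⟩
  exact ⟨⟨loc_of_assoc, fun hb => assoc_of_loc ⟨j₀, hb j₀⟩⟩, ⟨fun ha => ⟨j₀, loc_of_assoc ha j₀⟩, assoc_of_loc⟩⟩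
end
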